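/- If the LP relaxation of the minimum weight perfect b-matching problem has no fractional solution and w_ij = y*_i + y*_j holds for every edge {i,j} ∈ E (so no gap ε exists), then for any vertex i and any level t > n, the edges adjacent to the root in the minimum weight perfect tree-b-matching of the computation tree T_i^t are exactly the M*-edges at i; i.e., BP is correct after n iterations. -/

import Mathlib

set_option autoImplicit false

open Finset

variable {V : Type*}

/-- The degree of vertex `i` in the edge set `M`. -/
def degIn [DecidableEq V] (M : Finset (Sym2 V)) (i : V) : ℕ :=
  (M.filter (fun e => i ∈ e)).card

/-- `M` is a perfect b-matching of `G`. -/
def IsPerfectBMatching [Fintype V] [DecidableEq V] (G : SimpleGraph V) [DecidableRel G.Adj]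
    (b : V → ℕ) (M : Finset (Sym2 V)) : Prop :=
  M ⊆ G.edgeFinset ∧ ∀ i, degIn M i = b i

/-- Total weight of an edge set. -/
noncomputable def matchWeight (w : Sym2 V → ℝ) (M : Finset (Sym2 V)) : ℝ :=
  ∑ e ∈ M, w e

/-- The 0-1 incidence vector of an edge set. -/
def indic [DecidableEq V] (M : Finset (Sym2 V)) : Sym2 V → ℝ :=
  fun e => if e ∈ M then 1 else 0

/-- Feasibility for the LP relaxation of the minimum weight perfect b-matching problem. -/
def LPFeasible [Fintype V] [DecidableEq V] (G : SimpleGraph V) [DecidableRel G.Adj]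
    (b : V → ℕ) (x : Sym2 V → ℝ) : Prop :=
  (∀ e, e ∉ G.edgeFinset → x e = 0) ∧
  (∀ e ∈ G.edgeFinset, 0 ≤ x e ∧ x e ≤ 1) ∧
  (∀ i, ∑ e ∈ G.edgeFinset.filter (fun e => i ∈ e), x e = (b i : ℝ))

/-- LP objective value `∑ w_e x_e`. -/
noncomputable def LPCost [Fintype V] [DecidableEq V] (G : SimpleGraph V) [DecidableRel G.Adj]
    (w : Sym2 V → ℝ) (x : Sym2 V → ℝ) : ℝ :=
  ∑ e ∈ G.edgeFinset, w e * x e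

/-- Feasibility of the dual LP: `y i + y j ≤ w_{ij} + λ_{ij}` on edges and `λ ≥ 0`. -/
def DualFeasible [Fintype V] [DecidableEq V] (G : SimpleGraph V) [DecidableRel G.Adj]
    (w : Sym2 V → ℝ) (y : V → ℝ) (lam : Sym2 V → ℝ) : Prop :=
  (∀ i j, G.Adj i j → y i + y j ≤ w s(i, j) + lam s(i, j)) ∧
  (∀ e ∈ G.edgeFinset, 0 ≤ lam e)

/-- Dual LP objective `∑_i b_i y_i − ∑_e λ_e`. -/
noncomputable def DualObj [Fintype V] [DecidableEq V] (G : SimpleGraph V) [DecidableRel G.Adj]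
    (b : V → ℕ) (y : V → ℝ) (lam : Sym2 V → ℝ) : ℝ :=
  (∑ i, (b i : ℝ) * y i) - ∑ e ∈ G.edgeFinset, lam e

/-- An alternating walk of length `k` with respect to the edge set `M`:
consecutive vertices are adjacent, consecutive edges alternately belong to `M` and its
complement, and no edge is repeated immediately (`p t ≠ p (t+2)`). -/
def IsAltWalk [DecidableEq V] (G : SimpleGraph V) (M : Finset (Sym2 V))
    (k : ℕ) (p : ℕ → V) : Prop :=
  (∀ t, t < k → G.Adj (p t) (p (t + 1))) ∧
  (∀ t, t + 1 < k → (s(p t, p (t + 1)) ∈ M ↔ s(p (t + 1), p (t + 2)) ∉ M)) ∧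
  (∀ t, t + 1 < k → p t ≠ p (t + 2))

/-- A node of the `t`-level computation tree `T_i^t` of `G` rooted at `i`, encoded as the
list of labels on the path from the root to the node: it starts at `i`, consecutive labels
are adjacent in `G`, it never backtracks (rule (c): children of a node exclude the parent
label), and it has at most `t+1` entries (the tree has `t+1` levels). -/
def IsCTNode (G : SimpleGraph V) (i : V) (t : ℕ) (l : List V) : Prop :=
  l.Chain' G.Adj ∧ l.head? = some i ∧ 1 ≤ l.length ∧ l.length ≤ t + 1 ∧
  ∀ n (a c : V), l[n]? = some a → l[n + 2]? = some c → a ≠ c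

/-- The edge of the computation tree joining a (non-root) node to its parent, described by
the last two labels of the node. -/
def lastEdge? : List V → Option (Sym2 V) := fun l =>
  match l.reverse with
  | a :: b :: _ => some s(b, a)
  | _ => none

/-- The weight of the parent edge of a tree node. -/
noncomputable def nodeWeight (w : Sym2 V → ℝ) (l : List V) : ℝ :=
  ((lastEdge? l).map w).getD 0

/-- A perfect tree-b-matching of the computation tree `T_i^t`: a set `N` of tree edges
(each recorded as the lower node of the edge) such that every non-leaf node labelled `v'`
has exactly `b v'` incident selected edges (the parent edge plus the selected children
edges). -/
def IsTreeBMatching [Fintype V] [DecidableEq V] (G : SimpleGraph V) (b : V → ℕ)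
    (i : V) (t : ℕ) (N : Finset (List V)) : Prop :=
  (∀ l ∈ N, IsCTNode G i t l ∧ 2 ≤ l.length) ∧
  (∀ (l : List V) (v' : V), IsCTNode G i t l → l.length ≤ t → l.getLast? = some v' →
    ((if l ∈ N then 1 else 0) +
      (Finset.univ.filter (fun v : V => l ++ [v] ∈ N)).card) = b v')

/-- The total weight of a set of computation-tree edges. -/
noncomputable def treeWeight (w : Sym2 V → ℝ) (N : Finset (List V)) : ℝ :=
  ∑ l ∈ N, nodeWeight w l

/-- The tree edge recorded by the node `l` belongs to the lift of the edge set `M` of `G`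
to the computation tree `T_i^t` (i.e. the labels of its endpoints form an edge of `M`). -/
def InLift (G : SimpleGraph V) (i : V) (t : ℕ) (M : Finset (Sym2 V)) (l : List V) : Prop :=
  IsCTNode G i t l ∧ ∃ e ∈ M, lastEdge? l = some e

/-- The node of the computation tree at depth `k` along the downward path
`i, f 1, f 2, …`. -/
def Fpath (i : V) (f : ℕ → V) (k : ℕ) : List V :=
  i :: (List.range k).map (fun j => f (j + 1))

/-!
Since every edge is tight, every LP-feasible point costs `∑ v, b v * y v`, so uniqueness of the
optimum makes the LP polytope the single point `indic M`: it has no nonzero feasible direction.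
A closed alternating walk of even length gives one (`∓1` on its `M`- and non-`M`-edges, counted
with multiplicity), so by pigeonhole on even positions every alternating walk has length
`< 2n`. If `N` disagreed with `M` at the root, the degree count at the root would give a child
where `N` has an edge that `M` lacks and one where `M` has an edge that `N` lacks; counting at
each label pushes both disagreements down to depth `t`, and the two branches join through the
root into an alternating walk of length `2t > 2n`.
-/

section LP

variable [Fintype V] [DecidableEq V] {G : SimpleGraph V} [DecidableRel G.Adj]
  {w : Sym2 V → ℝ} {b : V → ℕ} {M : Finset (Sym2 V)} {y : V → ℝ}

lemma IsPerfectBMatching.adj (hM : IsPerfectBMatching G b M) {u v : V} (h : s(u, v) ∈ M) :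
    G.Adj u v :=
  G.mem_edgeFinset.mp (hM.1 h)

lemma IsPerfectBMatching.card_filter_mem (hM : IsPerfectBMatching G b M) (v : V) :
    #{x | s(v, x) ∈ M} = b v := by
  rw [← hM.2 v, degIn]
  refine Finset.card_bij (fun x _ => s(v, x)) (fun x hx => ?_) (fun x _ x' _ h => ?_) ?_
  · simpa using (Finset.mem_filter.mp hx).2
  · exact Sym2.congr_right.mp h
  · intro e he
    obtain ⟨heM, hve⟩ := Finset.mem_filter.mp he
    obtain ⟨x, rfl⟩ := Sym2.mem_iff_exists.mp hve
    exact ⟨x, by simpa using heM, rfl⟩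

lemma IsPerfectBMatching.lpFeasible_indic (hM : IsPerfectBMatching G b M) :
    LPFeasible G b (indic M) := by
  refine ⟨fun e he => if_neg fun h => he (hM.1 h), fun e _ => ?_, fun v => ?_⟩
  · unfold indic; split_ifs <;> norm_num
  · simp only [indic]
    rw [← hM.2 v, degIn, Finset.sum_boole, Finset.filter_filter]
    congr 2
    ext e
    simp only [Finset.mem_filter]
    exact ⟨fun h => ⟨h.2.2, h.2.1⟩, fun h => ⟨hM.1 h.1, h.2, h.1⟩⟩

omit [DecidableRel G.Adj] in
lemma sum_ite_mem_edge {u v : V} (huv : u ≠ v) (c : ℝ) :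
    ∑ x, (if x ∈ s(u, v) then y x * c else 0) = (y u + y v) * c := by
  rw [← Finset.sum_filter, show ({x | x ∈ s(u, v)} : Finset V) = {u, v} by ext; simp,
    Finset.sum_pair huv, add_mul]

lemma lpCost_eq_of_tight (heq : ∀ i j, G.Adj i j → w s(i, j) = y i + y j)
    {x : Sym2 V → ℝ} (hx : LPFeasible G b x) : LPCost G w x = ∑ v, (b v : ℝ) * y v := by
  have hedge : ∀ e ∈ G.edgeFinset, w e * x e = ∑ v, if v ∈ e then y v * x e else 0 := by
    intro e he
    induction e using Sym2.ind with
    | _ u v =>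
      have huv : G.Adj u v := G.mem_edgeFinset.mp he
      rw [heq u v huv, sum_ite_mem_edge huv.ne]
  calc LPCost G w x = ∑ v, ∑ e ∈ G.edgeFinset, if v ∈ e then y v * x e else 0 := by
        rw [LPCost, Finset.sum_congr rfl hedge, Finset.sum_comm]
    _ = ∑ v, (b v : ℝ) * y v := by
        refine Finset.sum_congr rfl fun v _ => ?_
        rw [← Finset.sum_filter, ← Finset.mul_sum, hx.2.2 v, mul_comm]

/-- A feasible direction of the LP polytope at its vertex `indic M`. -/
structure IsFeasibleDirection (G : SimpleGraph V) [DecidableRel G.Adj] (M : Finset (Sym2 V))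
    (d : Sym2 V → ℝ) : Prop where
  eq_zero_of_notMem_edgeFinset : ∀ e ∉ G.edgeFinset, d e = 0
  sum_incident_eq_zero : ∀ v, ∑ e ∈ G.edgeFinset.filter (fun e => v ∈ e), d e = 0
  nonpos_of_mem : ∀ e ∈ M, d e ≤ 0
  nonneg_of_notMem : ∀ e ∉ M, 0 ≤ d e

lemma IsFeasibleDirection.lpFeasible_indic_add {d : Sym2 V → ℝ}
    (hd : IsFeasibleDirection G M d) (hM : IsPerfectBMatching G b M) {ε : ℝ} (hε : 0 ≤ ε)
    (hεd : ∀ e ∈ G.edgeFinset, ε * |d e| ≤ 1) :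
    LPFeasible G b (fun e => indic M e + ε * d e) := by
  have hind := hM.lpFeasible_indic
  refine ⟨fun e he => ?_, fun e he => ?_, fun v => ?_⟩
  · dsimp only
    rw [hind.1 e he, hd.eq_zero_of_notMem_edgeFinset e he, mul_zero, add_zero]
  · have hbound : |ε * d e| ≤ 1 := by rw [abs_mul, abs_of_nonneg hε]; exact hεd e he
    rw [abs_le] at hbound
    by_cases heM : e ∈ M
    · have := mul_nonpos_of_nonneg_of_nonpos hε (hd.nonpos_of_mem e heM)
      simp only [indic, if_pos heM]
      constructor <;> linarith [hbound.1]
    · have := mul_nonneg hε (hd.nonneg_of_notMem e heM)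
      simp only [indic, if_neg heM]
      constructor <;> linarith [hbound.2]
  · rw [Finset.sum_add_distrib, ← Finset.mul_sum, hind.2.2 v, hd.sum_incident_eq_zero v,
      mul_zero, add_zero]

/-- If `indic M` is the unique optimum and all edges are tight, the LP polytope is the single
point `indic M`, so it admits no nonzero feasible direction. -/
lemma IsFeasibleDirection.eq_zero {d : Sym2 V → ℝ} (hd : IsFeasibleDirection G M d)
    (hM : IsPerfectBMatching G b M)
    (hnofrac : ∀ x', LPFeasible G b x' →
      LPCost G w x' = LPCost G w (indic M) → x' = indic M)
    (heq : ∀ i j, G.Adj i j → w s(i, j) = y i + y j) : d = 0 := by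
  set ε := 1 / (1 + ∑ e ∈ G.edgeFinset, |d e|)
  have hsum : 0 ≤ ∑ e ∈ G.edgeFinset, |d e| := Finset.sum_nonneg fun e _ => abs_nonneg _
  have hε : 0 < ε := by positivity
  have hεd : ∀ e ∈ G.edgeFinset, ε * |d e| ≤ 1 := by
    intro e he
    have : |d e| ≤ ∑ e ∈ G.edgeFinset, |d e| :=
      Finset.single_le_sum (f := fun e => |d e|) (fun e _ => abs_nonneg _) he
    rw [div_mul_eq_mul_div, one_mul, div_le_one (by positivity)]
    linarith
  have hfeas := hd.lpFeasible_indic_add hM hε.le hεd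
  have hx := hnofrac _ hfeas
    (by rw [lpCost_eq_of_tight heq hfeas, lpCost_eq_of_tight heq hM.lpFeasible_indic])
  funext e
  have hde : ε * d e = 0 := add_eq_left.mp (congrFun hx e)
  exact (mul_eq_zero.mp hde).resolve_left hε.ne'

end LP

section AltWalk

variable [DecidableEq V] {G : SimpleGraph V} {M : Finset (Sym2 V)} {k L : ℕ} {p : ℕ → V}

/-- Non-backtracking is automatic: `p s = p (s + 2)` would make edges `s` and `s + 1` equal. -/
lemma isAltWalk_of_alternating (hadj : ∀ s, s < k → G.Adj (p s) (p (s + 1)))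
    (halt : ∀ s, s + 1 < k → (s(p s, p (s + 1)) ∈ M ↔ s(p (s + 1), p (s + 2)) ∉ M)) :
    IsAltWalk G M k p := by
  refine ⟨hadj, halt, fun s hs hps => ?_⟩
  have := halt s hs
  rw [hps, Sym2.eq_swap] at this
  exact iff_not_self this

lemma IsAltWalk.shift (h : IsAltWalk G M k p) {a L : ℕ} (hL : a + L ≤ k) :
    IsAltWalk G M L (fun s => p (a + s)) :=
  ⟨fun s _ => h.1 (a + s) (by omega), fun s _ => h.2.1 (a + s) (by omega),
    fun s _ => h.2.2 (a + s) (by omega)⟩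

lemma IsAltWalk.update_succ (h : IsAltWalk G M k p) {x : V} (hadj : G.Adj (p k) x)
    (halt : 1 ≤ k → (s(p (k - 1), p k) ∈ M ↔ s(p k, x) ∉ M)) :
    IsAltWalk G M (k + 1) (Function.update p (k + 1) x) := by
  have hlow : ∀ s, s ≤ k → Function.update p (k + 1) x s = p s :=
    fun s hs => Function.update_of_ne (by omega) _ _
  refine isAltWalk_of_alternating (fun s hs => ?_) (fun s hs => ?_)
  · rw [hlow s (by omega)]
    rcases Nat.lt_or_ge s k with hsk | hsk
    · rw [hlow (s + 1) hsk]
      exact h.1 s hsk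
    · obtain rfl : s = k := by omega
      rw [Function.update_self]
      exact hadj
  · rw [hlow s (by omega), hlow (s + 1) (by omega)]
    rcases Nat.lt_or_ge (s + 1) k with hsk | hsk
    · rw [hlow (s + 2) hsk]
      exact h.2.1 s hsk
    · obtain rfl : s + 1 = k := by omega
      rw [Function.update_self]
      simpa using halt (by omega)

lemma IsAltWalk.reverse_append {k' : ℕ} {q : ℕ → V} (hp : IsAltWalk G M k p)
    (hq : IsAltWalk G M k' q) (h0 : p 0 = q 0)
    (hpq : s(p 0, p 1) ∈ M ↔ s(q 0, q 1) ∉ M) :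
    IsAltWalk G M (k + k') (fun s => if s ≤ k then p (k - s) else q (s - k)) := by
  set r := fun s => if s ≤ k then p (k - s) else q (s - k)
  have hl : ∀ s, s ≤ k → r s = p (k - s) := fun s hs => if_pos hs
  have hr : ∀ s, k ≤ s → r s = q (s - k) := by
    intro s hs
    rcases hs.eq_or_lt with rfl | hs
    · simp [r, h0]
    · exact if_neg (by omega)
  refine isAltWalk_of_alternating (fun s hs => ?_) (fun s hs => ?_)
  · rcases Nat.lt_or_ge s k with hsk | hsk
    · rw [hl s hsk.le, hl (s + 1) hsk, show k - s = k - (s + 1) + 1 by omega]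
      exact (hp.1 _ (by omega)).symm
    · rw [hr s hsk, hr (s + 1) (by omega), show s + 1 - k = s - k + 1 by omega]
      exact hq.1 _ (by omega)
  · rcases Nat.lt_or_ge (s + 1) k with hsk | hsk
    · have := hp.2.1 (k - (s + 2)) (by omega)
      rw [hl s (by omega), hl (s + 1) hsk.le, hl (s + 2) hsk,
        show k - s = k - (s + 2) + 2 by omega, show k - (s + 1) = k - (s + 2) + 1 by omega,
        Sym2.eq_swap (a := p (k - (s + 2) + 2)), Sym2.eq_swap (a := p (k - (s + 2) + 1))
        (b := p (k - (s + 2)))]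
      tauto
    · rcases hsk.eq_or_lt with hsk | hsk
      · rw [hl s (by omega), hr (s + 1) hsk.le, hr (s + 2) (by omega),
          show k - s = 1 by omega, show s + 1 - k = 0 by omega, show s + 2 - k = 1 by omega,
          Sym2.eq_swap]
        simpa only [h0] using hpq
      · have := hq.2.1 (s - k) (by omega)
        rw [hr s (by omega), hr (s + 1) (by omega), hr (s + 2) (by omega),
          show s + 1 - k = s - k + 1 by omega, show s + 2 - k = s - k + 2 by omega]
        exact this

/-- The direction in which `indic M` moves along an alternating walk. -/
def altSign (M : Finset (Sym2 V)) (e : Sym2 V) : ℝ :=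
  if e ∈ M then -1 else 1

lemma altSign_ne_zero (e : Sym2 V) : altSign M e ≠ 0 := by
  unfold altSign; split_ifs <;> norm_num

lemma IsAltWalk.altSign_eq (h : IsAltWalk G M k p) :
    ∀ s, s < k → altSign M s(p s, p (s + 1)) = (-1) ^ s * altSign M s(p 0, p 1)
  | 0, _ => by simp
  | s + 1, hs => by
    have halt : s(p s, p (s + 1)) ∈ M ↔ s(p (s + 1), p (s + 1 + 1)) ∉ M := h.2.1 s hs
    rw [pow_succ, mul_comm _ (-1 : ℝ), mul_assoc, ← h.altSign_eq s (by omega)]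
    unfold altSign
    split_ifs <;> simp_all

lemma sum_range_neg_one_pow_mul_add (g : ℕ → ℝ) (L : ℕ) :
    ∑ s ∈ range L, (-1) ^ s * (g s + g (s + 1)) = g 0 - (-1) ^ L * g L := by
  have htel := Finset.sum_range_sub (fun s => (-1 : ℝ) ^ s * g s) L
  simp only [pow_zero, one_mul] at htel
  rw [← neg_sub, ← htel, ← Finset.sum_neg_distrib]
  exact Finset.sum_congr rfl fun s _ => by ring

noncomputable def walkFlow (M : Finset (Sym2 V)) (L : ℕ) (p : ℕ → V) (e : Sym2 V) : ℝ :=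
  altSign M e * #{s ∈ range L | s(p s, p (s + 1)) = e}

lemma walkFlow_ne_zero (hL : 0 < L) : walkFlow M L p s(p 0, p 1) ≠ 0 := by
  refine mul_ne_zero (altSign_ne_zero _) (Nat.cast_ne_zero.mpr (Finset.card_ne_zero.mpr ?_))
  exact ⟨0, Finset.mem_filter.mpr ⟨Finset.mem_range.mpr hL, rfl⟩⟩

end AltWalk

section ClosedAltWalk

variable [Fintype V] [DecidableEq V] {G : SimpleGraph V} [DecidableRel G.Adj]
  {w : Sym2 V → ℝ} {b : V → ℕ} {M : Finset (Sym2 V)} {y : V → ℝ} {k L : ℕ} {p : ℕ → V}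

lemma sum_incident_walkFlow (hadj : ∀ s, s < L → G.Adj (p s) (p (s + 1))) (v : V) :
    ∑ e ∈ G.edgeFinset.filter (fun e => v ∈ e), walkFlow M L p e =
      ∑ s ∈ range L, if v ∈ s(p s, p (s + 1)) then altSign M s(p s, p (s + 1)) else 0 := by
  have hedge : ∀ s ∈ range L, s(p s, p (s + 1)) ∈ G.edgeFinset := fun s hs =>
    G.mem_edgeFinset.mpr (hadj s (Finset.mem_range.mp hs))
  simp only [walkFlow, Finset.card_filter, Nat.cast_sum, Finset.mul_sum, Nat.cast_ite,
    Nat.cast_one, Nat.cast_zero, mul_ite, mul_one, mul_zero]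
  rw [Finset.sum_comm]
  refine Finset.sum_congr rfl fun s hs => ?_
  simp only [Finset.sum_ite_eq, Finset.mem_filter, hedge s hs, true_and]

/-- Each visit of a vertex enters and leaves it along edges of opposite signs; evenness makes
the signs match up where the walk closes. -/
lemma IsAltWalk.isFeasibleDirection_walkFlow (h : IsAltWalk G M L p) (hclosed : p L = p 0)
    (hL : Even L) : IsFeasibleDirection G M (walkFlow M L p) := by
  refine ⟨fun e he => ?_, fun v => ?_, fun e he => ?_, fun e he => ?_⟩
  · rw [walkFlow, Finset.card_eq_zero.mpr, Nat.cast_zero, mul_zero]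
    refine Finset.filter_eq_empty_iff.mpr fun s hs hse => he ?_
    exact hse ▸ G.mem_edgeFinset.mpr (h.1 s (Finset.mem_range.mp hs))
  · set g : ℕ → ℝ := fun s => if p s = v then 1 else 0
    have hterm : ∀ s ∈ range L,
        (if v ∈ s(p s, p (s + 1)) then altSign M s(p s, p (s + 1)) else 0) =
          altSign M s(p 0, p 1) * ((-1) ^ s * (g s + g (s + 1))) := by
      intro s hs
      have hs := Finset.mem_range.mp hs
      rw [← mul_assoc, mul_comm (altSign M s(p 0, p 1)), ← h.altSign_eq s hs]
      have hne := (h.1 s hs).ne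
      by_cases h1 : p s = v <;> by_cases h2 : p (s + 1) = v
      · exact absurd (h1.trans h2.symm) hne
      all_goals simp [g, h1, h2, @eq_comm _ v]
    rw [sum_incident_walkFlow h.1, Finset.sum_congr rfl hterm, ← Finset.mul_sum,
      sum_range_neg_one_pow_mul_add, hL.neg_one_pow, one_mul]
    simp [g, hclosed]
  · simp only [walkFlow, altSign, if_pos he]
    exact mul_nonpos_of_nonpos_of_nonneg (by norm_num) (Nat.cast_nonneg _)
  · simp only [walkFlow, altSign, if_neg he, one_mul]
    exact Nat.cast_nonneg _

lemma IsAltWalk.ne_of_even (hM : IsPerfectBMatching G b M)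
    (hnofrac : ∀ x', LPFeasible G b x' →
      LPCost G w x' = LPCost G w (indic M) → x' = indic M)
    (heq : ∀ i j, G.Adj i j → w s(i, j) = y i + y j)
    (h : IsAltWalk G M L p) (hL : Even L) (hL0 : 0 < L) : p L ≠ p 0 := fun hclosed =>
  walkFlow_ne_zero hL0 <|
    congrFun ((h.isFeasibleDirection_walkFlow hclosed hL).eq_zero hM hnofrac heq) _

/-- Among the `n + 1` even positions of a walk of length `2n` some vertex repeats, closing
an alternating walk of even length. -/
theorem IsAltWalk.lt_two_mul_card (hM : IsPerfectBMatching G b M)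
    (hnofrac : ∀ x', LPFeasible G b x' →
      LPCost G w x' = LPCost G w (indic M) → x' = indic M)
    (heq : ∀ i j, G.Adj i j → w s(i, j) = y i + y j)
    (h : IsAltWalk G M k p) : k < 2 * Fintype.card V := by
  by_contra! hk
  obtain ⟨j₁, hj₁, j₂, hj₂, hne, hp⟩ := Finset.exists_ne_map_eq_of_card_lt_of_maps_to
    (s := range (Fintype.card V + 1)) (t := univ) (f := fun j => p (2 * j)) (by simp)
    (fun _ _ => Finset.mem_coe.mpr (mem_univ _))
  wlog hlt : j₁ < j₂ generalizing j₁ j₂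
  · exact this j₂ hj₂ j₁ hj₁ hne.symm hp.symm (by omega)
  simp only [Finset.mem_range] at hj₁ hj₂
  refine (h.shift (a := 2 * j₁) (L := 2 * (j₂ - j₁)) (by omega)).ne_of_even hM hnofrac heq
    (even_two_mul _) (by omega) ?_
  rw [add_zero, show 2 * j₁ + 2 * (j₂ - j₁) = 2 * j₂ by omega]
  exact hp.symm

end ClosedAltWalk

section ComputationTree

variable {G : SimpleGraph V} {i : V} {t k : ℕ} {f : ℕ → V}

lemma fpath_eq_map (hf : f 0 = i) : Fpath i f k = (List.range (k + 1)).map f := by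
  simp [Fpath, List.range_succ_eq_map, hf]

lemma fpath_length : (Fpath i f k).length = k + 1 := by
  simp [Fpath]

lemma fpath_getElem? (hf : f 0 = i) {j : ℕ} (hj : j ≤ k) : (Fpath i f k)[j]? = some (f j) := by
  simp [fpath_eq_map hf, List.getElem?_range (Nat.lt_succ_of_le hj)]

lemma fpath_update_succ (x : V) :
    Fpath i (Function.update f (k + 1) x) (k + 1) = Fpath i f k ++ [x] := by
  simp only [Fpath, List.range_succ, List.map_append, List.map_cons, List.map_nil,
    Function.update_self, List.cons_append]
  congr 2
  refine List.map_congr_left fun j hj => Function.update_of_ne ?_ _ _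
  have := List.mem_range.mp hj
  omega

lemma IsAltWalk.isCTNode_fpath [DecidableEq V] {M : Finset (Sym2 V)} (h : IsAltWalk G M k f)
    (hf : f 0 = i) (hk : k ≤ t) : IsCTNode G i t (Fpath i f k) := by
  refine ⟨?_, rfl, by simp [Fpath], by simp [Fpath, hk], fun j a c ha hc => ?_⟩
  · rw [fpath_eq_map hf, List.Chain', List.isChain_iff_getElem]
    intro j hj
    simp only [List.length_map, List.length_range] at hj
    simpa using h.1 j (by omega)
  · simp only [fpath_eq_map hf, List.getElem?_map, Option.map_eq_some_iff,
      List.getElem?_eq_some_iff, List.length_range, List.getElem_range] at ha hc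
    obtain ⟨_, ⟨-, rfl⟩, rfl⟩ := ha
    obtain ⟨_, ⟨hj, rfl⟩, rfl⟩ := hc
    exact h.2.2 j (by omega)

variable [Fintype V] [DecidableEq V] [DecidableRel G.Adj] {b : V → ℕ} {M : Finset (Sym2 V)}
  {N : Finset (List V)}

lemma IsTreeBMatching.exists_child (hN : IsTreeBMatching G b i t N)
    (hM : IsPerfectBMatching G b M) {l : List V} {u v : V} (hl : IsCTNode G i t l)
    (hlen : l.length ≤ t) (h2 : 2 ≤ l.length) (hu : l[l.length - 2]? = some u)
    (hv : l.getLast? = some v) (hdis : l ∈ N ↔ s(u, v) ∉ M) :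
    ∃ x, G.Adj v x ∧ (l ++ [x] ∈ N ↔ l ∉ N) ∧ (s(v, x) ∈ M ↔ l ∈ N) := by
  have hcount := hN.2 l v hl hlen hv
  have hMv := hM.card_filter_mem v
  by_cases hlN : l ∈ N
  · rw [if_pos hlN] at hcount
    obtain ⟨x, hxM, hxN⟩ := Finset.exists_mem_notMem_of_card_lt_card
      (s := {x | l ++ [x] ∈ N}) (t := {x | s(v, x) ∈ M}) (by omega)
    simp only [Finset.mem_filter, Finset.mem_univ, true_and] at hxM hxN
    exact ⟨x, hM.adj hxM, iff_of_false hxN (not_not.mpr hlN), iff_of_true hxM hlN⟩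
  · rw [if_neg hlN, zero_add] at hcount
    have huv : u ∈ ({x | s(v, x) ∈ M} : Finset V) := by
      simpa [Sym2.eq_swap] using not_not.mp (mt hdis.mpr hlN)
    have hpos := Finset.card_pos.mpr ⟨u, huv⟩
    obtain ⟨x, hxN, hxM⟩ := Finset.exists_mem_notMem_of_card_lt_card
      (s := ({x | s(v, x) ∈ M} : Finset V).erase u) (t := {x | l ++ [x] ∈ N})
      (by rw [Finset.card_erase_of_mem huv]; omega)
    simp only [Finset.mem_filter, Finset.mem_univ, true_and] at hxN
    have hx := (hN.1 _ hxN).1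
    -- the tree node `l ++ [x]` does not backtrack
    have hxu : x ≠ u := by
      rintro rfl
      refine hx.2.2.2.2 (l.length - 2) x x ?_ ?_ rfl
      · rw [List.getElem?_append_left (by omega)]
        exact hu
      · rw [show l.length - 2 + 2 = l.length by omega]
        simp
    have hadj : G.Adj v x := (List.isChain_append.mp hx.1).2.2 v hv x rfl
    refine ⟨x, hadj, iff_of_true hxN hlN, iff_of_false (fun h => hxM ?_) hlN⟩
    simpa [hxu] using h

lemma IsTreeBMatching.exists_root_disagreements (hN : IsTreeBMatching G b i t N)
    (hM : IsPerfectBMatching G b M) (ht : 1 ≤ t) {v : V}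
    (hv : ¬([i, v] ∈ N ↔ G.Adj i v ∧ s(i, v) ∈ M)) :
    ∃ cA cB, ([i, cA] ∈ N ∧ s(i, cA) ∉ M) ∧ ([i, cB] ∉ N ∧ s(i, cB) ∈ M) := by
  have hroot : IsCTNode G i t [i] :=
    ⟨List.isChain_singleton i, rfl, le_rfl, by simp, fun _ _ _ _ hc => by simp at hc⟩
  have hiN : [i] ∉ N := fun h => by simpa using (hN.1 _ h).2
  have hcard : #{x | [i, x] ∈ N} = #{x | s(i, x) ∈ M} := by
    simpa [hiN, hM.card_filter_mem i] using hN.2 [i] i hroot (by simpa using ht) rfl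
  have hsdiff {S T : Finset V} (hST : #S = #T) {a : V} (ha : a ∈ S \ T) : ∃ c ∈ T, c ∉ S := by
    obtain ⟨c, hc⟩ := Finset.card_pos.mp <|
      (Finset.card_sdiff_comm hST) ▸ Finset.card_pos.mpr ⟨a, ha⟩
    exact ⟨c, (Finset.mem_sdiff.mp hc).1, (Finset.mem_sdiff.mp hc).2⟩
  by_cases hvN : [i, v] ∈ N
  · have hvM : s(i, v) ∉ M := fun h => hv (iff_of_true hvN ⟨hM.adj h, h⟩)
    obtain ⟨cB, hcB, hcB'⟩ := hsdiff hcard (a := v) (by simp [hvN, hvM])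
    simp only [Finset.mem_filter, Finset.mem_univ, true_and] at hcB hcB'
    exact ⟨v, cB, ⟨hvN, hvM⟩, hcB', hcB⟩
  · have hvM : s(i, v) ∈ M := by_contra fun h => hv (iff_of_false hvN fun h' => h h'.2)
    obtain ⟨cA, hcA, hcA'⟩ := hsdiff hcard.symm (a := v) (by simp [hvN, hvM])
    simp only [Finset.mem_filter, Finset.mem_univ, true_and] at hcA hcA'
    exact ⟨cA, v, ⟨hcA, hcA'⟩, hvN, hvM⟩

/-- Below a node where `N` and the lift of `M` disagree, counting selected edges at its label
yields a child where they disagree the other way round. -/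
lemma IsTreeBMatching.exists_isAltWalk (hN : IsTreeBMatching G b i t N)
    (hM : IsPerfectBMatching G b M) (ht : 1 ≤ t) {c : V} (hc : G.Adj i c)
    (hdis : [i, c] ∈ N ↔ s(i, c) ∉ M) :
    ∃ f : ℕ → V, f 0 = i ∧ f 1 = c ∧ IsAltWalk G M t f := by
  suffices ∀ k, 1 ≤ k → k ≤ t → ∃ f : ℕ → V, f 0 = i ∧ f 1 = c ∧ IsAltWalk G M k f ∧
      (Fpath i f k ∈ N ↔ s(f (k - 1), f k) ∉ M) by
    obtain ⟨f, hf0, hf1, hf, -⟩ := this t ht le_rfl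
    exact ⟨f, hf0, hf1, hf⟩
  intro k hk
  induction k, hk using Nat.le_induction with
  | base =>
    intro _
    have hi : IsAltWalk G M 0 (fun _ => i) :=
      ⟨fun _ h => absurd h (Nat.not_lt_zero _), fun _ h => absurd h (by omega),
        fun _ h => absurd h (by omega)⟩
    refine ⟨Function.update (fun _ => i) 1 c, rfl, Function.update_self .., ?_, ?_⟩
    · exact hi.update_succ hc (by omega)
    · simpa [fpath_update_succ, Fpath] using hdis
  | succ k hk ih =>
    intro hkt
    obtain ⟨f, hf0, hf1, hf, hdisk⟩ := ih (by omega)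
    obtain ⟨x, hx, hxN, hxM⟩ := hN.exists_child hM (hf.isCTNode_fpath hf0 (by omega))
      (by rw [fpath_length]; omega) (by rw [fpath_length]; omega)
      (by rw [fpath_length, show k + 1 - 2 = k - 1 by omega]; exact fpath_getElem? hf0 (by omega))
      (by rw [List.getLast?_eq_getElem?, fpath_length]; exact fpath_getElem? hf0 le_rfl) hdisk
    refine ⟨Function.update f (k + 1) x, ?_, ?_, ?_, ?_⟩
    · rw [Function.update_of_ne (by omega), hf0]
    · rw [Function.update_of_ne (by omega), hf1]
    · exact hf.update_succ hx fun _ => by tauto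
    · simpa [fpath_update_succ] using hxN.trans (by tauto)

end ComputationTree

theorem stmt12_general [Fintype V] [DecidableEq V] (G : SimpleGraph V) [DecidableRel G.Adj]
    (w : Sym2 V → ℝ) (b : V → ℕ) (M : Finset (Sym2 V)) (y : V → ℝ)
    (hM : IsPerfectBMatching G b M)
    (hnofrac : ∀ x', LPFeasible G b x' →
      LPCost G w x' = LPCost G w (indic M) → x' = indic M)
    (heq : ∀ i j, G.Adj i j → w s(i, j) = y i + y j)
    (i : V) (t : ℕ) (ht : Fintype.card V < t)
    (N : Finset (List V))
    (hN : IsTreeBMatching G b i t N) :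
    ∀ v : V, [i, v] ∈ N ↔ (G.Adj i v ∧ s(i, v) ∈ M) := by
  intro v
  by_contra hv
  have ht1 : 1 ≤ t := by
    have := Fintype.card_pos_iff.mpr ⟨i⟩
    omega
  obtain ⟨cA, cB, ⟨hAN, hAM⟩, hBN, hBM⟩ := hN.exists_root_disagreements hM ht1 hv
  obtain ⟨p, hp0, hp1, hp⟩ := hN.exists_isAltWalk hM ht1
    (List.isChain_pair.mp (hN.1 _ hAN).1.1) (iff_of_true hAN hAM)
  obtain ⟨q, hq0, hq1, hq⟩ := hN.exists_isAltWalk hM ht1 (hM.adj hBM)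
    (iff_of_false hBN (not_not.mpr hBM))
  have hwalk := hp.reverse_append hq (hp0.trans hq0.symm) (by rw [hp0, hp1, hq0, hq1]; tauto)
  have := hwalk.lt_two_mul_card hM hnofrac heq
  omega

/-- if the LP relaxation has no fractional optimal solution (unique optimal
solution, the incidence vector of `M*`) and the optimal dual `y*` satisfies
`w_{ij} = y*_i + y*_j` on every edge (so no gap `ε` exists), then for every vertex `i` and
every level `t > n`, the edges at the root of any minimum weight perfect tree-b-matching
of the computation tree `T_i^t` are exactly the `M*`-edges at `i`: BP is correct after `n`
iterations. -/
theorem stmt12 [Fintype V] [DecidableEq V] (G : SimpleGraph V) [DecidableRel G.Adj]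
    (w : Sym2 V → ℝ) (b : V → ℕ) (M : Finset (Sym2 V)) (y : V → ℝ) (lam : Sym2 V → ℝ)
    (hb : ∀ v, b v < G.degree v)
    (hM : IsPerfectBMatching G b M)
    (hopt : ∀ x', LPFeasible G b x' → LPCost G w (indic M) ≤ LPCost G w x')
    (hnofrac : ∀ x', LPFeasible G b x' →
      LPCost G w x' = LPCost G w (indic M) → x' = indic M)
    (hd : DualFeasible G w y lam)
    (hdopt : ∀ y' lam', DualFeasible G w y' lam' → DualObj G b y' lam' ≤ DualObj G b y lam)
    (heq : ∀ i j, G.Adj i j → w s(i, j) = y i + y j)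
    (i : V) (t : ℕ) (ht : Fintype.card V < t)
    (N : Finset (List V))
    (hN : IsTreeBMatching G b i t N)
    (hNopt : ∀ N', IsTreeBMatching G b i t N' → treeWeight w N ≤ treeWeight w N') :
    ∀ v : V, [i, v] ∈ N ↔ (G.Adj i v ∧ s(i, v) ∈ M) :=
  stmt12_general G w b M y hM hnofrac heq i t ht N hN
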